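/- In the linear order of infinite decimal expansions (formal series d = ±Σ_{n≤k} d_n·10^n with digits in {0,...,9}, not eventually all 9, and not negative zero), every nonempty set bounded from above has a supremum. -/

import Mathlib

/-- An infinite decimal expansion `±Σ_{n≤k} d_n·10^n`: an optional minus sign,
an order `k ∈ ℕ₀`, digits `d_n ∈ {0,…,9}` (zero above the order, leading digit
nonzero unless `k = 0`), no infinite tail of 9s, and `-0` excluded. -/
structure Decimal where
  neg : Bool
  k : ℕ
  digits : ℤ → Fin 10
  digits_above : ∀ n : ℤ, (k : ℤ) < n → digits n = 0
  leading : digits k ≠ 0 ∨ k = 0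
  no_nine_tail : ∀ n : ℤ, ∃ m : ℤ, m ≤ n ∧ digits m ≠ 9
  no_neg_zero : neg = true → ∃ n : ℤ, digits n ≠ 0

/-- The lexicographic-on-digits order `<_R` on decimals, with signs treated
in the usual way. -/
def Decimal.lt (d e : Decimal) : Prop :=
  (d.neg = true ∧ e.neg = false) ∨
  (d.neg = false ∧ e.neg = false ∧
    ∃ i : ℤ, d.digits i < e.digits i ∧ ∀ j : ℤ, i < j → d.digits j = e.digits j) ∨
  (d.neg = true ∧ e.neg = true ∧
    ∃ i : ℤ, e.digits i < d.digits i ∧ ∀ j : ℤ, i < j → d.digits j = e.digits j)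


/-!
The value map `Decimal.toReal` turns `<_R` into `<` on `ℝ`. It is strictly monotone: if two
decimals first differ at position `i`, the digits below `i` of the smaller one sum to strictly
less than `10 ^ i`, precisely because there is no tail of 9s. Together with trichotomy of `<_R`
this makes `toReal` an order embedding, and it is onto, a real `r ≥ 0` being expanded with the
digits `⌊r / 10 ^ n⌋ mod 10`. The supremum is the expansion of the real supremum.
-/

lemma hasSum_nine_mul_zpow (i : ℤ) :
    HasSum (fun j : ℕ => 9 * (10 : ℝ) ^ (i - j)) (10 ^ (i + 1)) := by
  have hsum : (9 : ℝ) * 10 ^ i * (1 - 10⁻¹)⁻¹ = 10 ^ (i + 1) := by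
    rw [zpow_add_one₀ (by norm_num)]
    norm_num
    ring
  have hterm : (fun j : ℕ => 9 * (10 : ℝ) ^ (i - j)) = fun j => 9 * 10 ^ i * 10⁻¹ ^ j := by
    funext j
    rw [zpow_sub₀ (by norm_num), zpow_natCast, inv_pow, div_eq_mul_inv, mul_assoc]
  rw [hterm, ← hsum]
  exact (hasSum_geometric_of_lt_one (by norm_num) (by norm_num)).mul_left _

lemma exists_le_zpow_lt {y ε : ℝ} (hy : 1 < y) (hε : 0 < ε) (n : ℤ) :
    ∃ m ≤ n, y ^ m < ε := by
  obtain ⟨m, hm, -⟩ := exists_mem_Ico_zpow hε hy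
  refine ⟨min n (m - 1), min_le_left _ _, ?_⟩
  calc y ^ min n (m - 1) ≤ y ^ (m - 1) := zpow_le_zpow_right₀ hy.le (min_le_right _ _)
    _ < y ^ m := zpow_lt_zpow_right₀ hy (by omega)
    _ ≤ ε := hm

lemma nonpos_of_forall_le_zpow {x y : ℝ} (hy : 1 < y) (n : ℤ) (h : ∀ m ≤ n, x ≤ y ^ m) :
    x ≤ 0 := by
  by_contra! hx
  obtain ⟨m, hmn, hm⟩ := exists_le_zpow_lt hy hx n
  exact (h m hmn).not_gt hm

namespace Decimal

noncomputable def term (d : Decimal) (n : ℤ) : ℝ := ((d.digits n : ℕ) : ℝ) * 10 ^ n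

noncomputable def tail (d : Decimal) (i : ℤ) : ℝ := ∑' j : ℕ, d.term (i - j)

noncomputable def magnitude (d : Decimal) : ℝ := d.tail d.k

noncomputable def toReal (d : Decimal) : ℝ := if d.neg then -d.magnitude else d.magnitude

lemma term_nonneg (d : Decimal) (n : ℤ) : 0 ≤ d.term n := by
  unfold term; positivity

lemma term_le (d : Decimal) (n : ℤ) : d.term n ≤ 9 * 10 ^ n :=
  mul_le_mul_of_nonneg_right (by exact_mod_cast Nat.le_of_lt_succ (d.digits n).is_lt)
    (by positivity)

lemma term_lt_of_digits_ne_nine {d : Decimal} {n : ℤ} (h : d.digits n ≠ 9) :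
    d.term n < 9 * 10 ^ n := by
  have : (d.digits n : ℕ) < 9 := by have := (d.digits n).is_lt; omega
  exact mul_lt_mul_of_pos_right (by exact_mod_cast this) (by positivity)

lemma summable_tail (d : Decimal) (i : ℤ) : Summable fun j : ℕ => d.term (i - j) :=
  (hasSum_nine_mul_zpow i).summable.of_nonneg_of_le (fun _ => d.term_nonneg _)
    (fun _ => d.term_le _)

lemma tail_nonneg (d : Decimal) (i : ℤ) : 0 ≤ d.tail i :=
  tsum_nonneg fun _ => d.term_nonneg _

lemma term_le_tail (d : Decimal) {n i : ℤ} (h : n ≤ i) : d.term n ≤ d.tail i := by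
  have := (d.summable_tail i).le_tsum (i - n).toNat fun _ _ => d.term_nonneg _
  rwa [show i - ((i - n).toNat : ℤ) = n by omega] at this

lemma tail_eq_term_add_tail (d : Decimal) (i : ℤ) : d.tail i = d.term i + d.tail (i - 1) := by
  rw [tail, (d.summable_tail i).tsum_eq_zero_add, tail]
  congr 1
  · simp
  · congr 1
    funext j
    push_cast
    ring_nf

lemma tail_lt_zpow (d : Decimal) (i : ℤ) : d.tail i < 10 ^ (i + 1) := by
  obtain ⟨m, hmi, hm⟩ := d.no_nine_tail i
  refine hasSum_lt (i := (i - m).toNat) (fun j => d.term_le _) ?_ (d.summable_tail i).hasSum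
    (hasSum_nine_mul_zpow i)
  rw [show i - ((i - m).toNat : ℤ) = m by omega]
  exact term_lt_of_digits_ne_nine hm

lemma tail_eq_magnitude (d : Decimal) {i : ℤ} (hi : (d.k : ℤ) ≤ i) :
    d.tail i = d.magnitude := by
  induction i, hi using Int.leInduction with
  | base => rfl
  | succ i hi ih =>
    rw [tail_eq_term_add_tail, add_sub_cancel_right, ih, term, d.digits_above _ (by omega)]
    simp

lemma magnitude_nonneg (d : Decimal) : 0 ≤ d.magnitude :=
  d.tail_nonneg d.k

lemma magnitude_pos {d : Decimal} {n : ℤ} (hn : d.digits n ≠ 0) : 0 < d.magnitude := by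
  have hterm : 0 < d.term n := by
    have : 0 < (d.digits n : ℕ) := Nat.pos_of_ne_zero (Fin.val_ne_iff.2 hn)
    unfold term; positivity
  rw [← d.tail_eq_magnitude (le_max_right (n : ℤ) d.k)]
  exact hterm.trans_le (d.term_le_tail (le_max_left _ _))

lemma tail_lt_tail {d e : Decimal} {i : ℤ} (hlt : d.digits i < e.digits i)
    (heq : ∀ j, i < j → d.digits j = e.digits j) {I : ℤ} (hI : i ≤ I) :
    d.tail I < e.tail I := by
  induction I, hI using Int.leInduction with
  | base =>
    have hdig : ((d.digits i : ℕ) : ℝ) + 1 ≤ (e.digits i : ℕ) := by exact_mod_cast hlt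
    have hd := d.tail_lt_zpow (i - 1)
    rw [sub_add_cancel] at hd
    calc d.tail i = d.term i + d.tail (i - 1) := d.tail_eq_term_add_tail i
      _ < (((d.digits i : ℕ) : ℝ) + 1) * 10 ^ i := by rw [term]; linarith
      _ ≤ e.term i := mul_le_mul_of_nonneg_right hdig (by positivity)
      _ ≤ e.tail i := e.term_le_tail le_rfl
  | succ I hI ih =>
    rw [tail_eq_term_add_tail, tail_eq_term_add_tail e, add_sub_cancel_right, term, term,
      heq (I + 1) (by omega)]
    linarith

lemma magnitude_lt_magnitude {d e : Decimal} {i : ℤ} (hlt : d.digits i < e.digits i)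
    (heq : ∀ j, i < j → d.digits j = e.digits j) : d.magnitude < e.magnitude := by
  set I := max i (max d.k e.k)
  rw [← d.tail_eq_magnitude (show (d.k : ℤ) ≤ I by omega),
    ← e.tail_eq_magnitude (show (e.k : ℤ) ≤ I by omega)]
  exact tail_lt_tail hlt heq (le_max_left _ _)

lemma toReal_lt_toReal {d e : Decimal} (h : d.lt e) : d.toReal < e.toReal := by
  rcases h with ⟨hd, he⟩ | ⟨hd, he, i, hlt, heq⟩ | ⟨hd, he, i, hlt, heq⟩
  · obtain ⟨n, hn⟩ := d.no_neg_zero hd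
    simp only [toReal, hd, he, if_true, Bool.false_eq_true, if_false]
    linarith [magnitude_pos hn, e.magnitude_nonneg]
  · simpa [toReal, hd, he] using magnitude_lt_magnitude hlt heq
  · simpa [toReal, hd, he] using magnitude_lt_magnitude hlt fun j hj => (heq j hj).symm

lemma k_le_of_digits_eq {d e : Decimal} (h : d.digits = e.digits) : d.k ≤ e.k := by
  by_contra hk
  have hzero := e.digits_above d.k (by omega)
  rw [← h] at hzero
  exact d.leading.resolve_right (by omega) hzero

lemma ext_of_digits_eq {d e : Decimal} (hneg : d.neg = e.neg) (h : d.digits = e.digits) :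
    d = e := by
  have hk := (k_le_of_digits_eq h).antisymm (k_le_of_digits_eq h.symm)
  cases d; cases e
  simp_all

lemma exists_greatest_digits_ne {d e : Decimal} (h : d.digits ≠ e.digits) :
    ∃ i, d.digits i ≠ e.digits i ∧ ∀ j, i < j → d.digits j = e.digits j := by
  have hbdd : ∃ b : ℤ, ∀ z, d.digits z ≠ e.digits z → z ≤ b := by
    refine ⟨max d.k e.k, fun z hz => ?_⟩
    by_contra hlt
    exact hz ((d.digits_above z (by omega)).trans (e.digits_above z (by omega)).symm)
  obtain ⟨i, hi, hgreatest⟩ := Int.exists_greatest_of_bdd hbdd (Function.ne_iff.1 h)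
  exact ⟨i, hi, fun j hj => not_not.1 fun hne => (hgreatest j hne).not_gt hj⟩

lemma lt_trichotomy (d e : Decimal) : d.lt e ∨ d = e ∨ e.lt d := by
  by_cases h : d.digits = e.digits
  · by_cases hneg : d.neg = e.neg
    · exact Or.inr (Or.inl (ext_of_digits_eq hneg h))
    · cases hd : d.neg <;> cases he : e.neg <;> simp_all [Decimal.lt]
  · obtain ⟨i, hne, heq⟩ := exists_greatest_digits_ne h
    rcases hne.lt_or_gt with hlt | hlt <;> cases hd : d.neg <;> cases he : e.neg <;>
      simp only [Decimal.lt, hd, he] <;> grind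

lemma lt_or_eq_iff_toReal_le {d e : Decimal} : d.lt e ∨ d = e ↔ d.toReal ≤ e.toReal := by
  refine ⟨by rintro (h | rfl); exacts [(toReal_lt_toReal h).le, le_rfl], fun h => ?_⟩
  rcases lt_trichotomy d e with hlt | heq | hgt
  exacts [Or.inl hlt, Or.inr heq, absurd (toReal_lt_toReal hgt) h.not_gt]

noncomputable def scaledFloor (r : ℝ) (n : ℤ) : ℕ := ⌊r / 10 ^ n⌋₊

noncomputable def digitOf (r : ℝ) (n : ℤ) : Fin 10 := ⟨scaledFloor r n % 10, by omega⟩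

noncomputable def order (r : ℝ) : ℕ := Nat.log 10 ⌊r⌋₊

section OfNonneg

variable {r : ℝ}

lemma scaledFloor_add_one (r : ℝ) (n : ℤ) : scaledFloor r (n + 1) = scaledFloor r n / 10 := by
  rw [scaledFloor, scaledFloor, ← Nat.floor_div_ofNat, zpow_add_one₀ (by norm_num), div_div]

lemma scaledFloor_eq_ten_mul_add_digitOf (r : ℝ) (n : ℤ) :
    (scaledFloor r n : ℝ) = 10 * scaledFloor r (n + 1) + (digitOf r n : ℕ) := by
  rw [scaledFloor_add_one]
  exact_mod_cast (Nat.div_add_mod _ 10).symm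

lemma scaledFloor_mul_le (hr : 0 ≤ r) (n : ℤ) : (scaledFloor r n : ℝ) * 10 ^ n ≤ r :=
  (le_div_iff₀ (by positivity)).1 (Nat.floor_le (by positivity))

lemma lt_scaledFloor_add_one_mul (r : ℝ) (n : ℤ) : r < (scaledFloor r n + 1) * 10 ^ n :=
  (div_lt_iff₀ (by positivity)).1 (Nat.lt_floor_add_one _)

lemma lt_zpow_order (r : ℝ) : r < 10 ^ ((order r : ℤ) + 1) := by
  have h := Nat.lt_pow_succ_log_self (by norm_num : 1 < 10) ⌊r⌋₊
  calc r < ⌊r⌋₊ + 1 := Nat.lt_floor_add_one r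
    _ ≤ ((10 ^ (order r + 1) : ℕ) : ℝ) := by exact_mod_cast h
    _ = 10 ^ ((order r : ℤ) + 1) := by rw [Nat.cast_pow, ← zpow_natCast]; push_cast; rfl

lemma zpow_order_le (h : order r ≠ 0) : (10 : ℝ) ^ (order r : ℤ) ≤ r := by
  have hfloor : ⌊r⌋₊ ≠ 0 := fun h0 => h (by simp [order, h0])
  have hr : 0 ≤ r := by by_contra! hneg; exact hfloor (Nat.floor_of_nonpos hneg.le)
  calc (10 : ℝ) ^ (order r : ℤ) = ((10 ^ order r : ℕ) : ℝ) := by push_cast; rfl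
    _ ≤ ⌊r⌋₊ := by exact_mod_cast Nat.pow_log_le_self 10 hfloor
    _ ≤ r := Nat.floor_le hr

lemma scaledFloor_eq_zero {n : ℤ} (hn : (order r : ℤ) < n) : scaledFloor r n = 0 := by
  refine Nat.floor_eq_zero.2 ((div_lt_one (by positivity)).2 ((lt_zpow_order r).trans_le ?_))
  exact zpow_le_zpow_right₀ (by norm_num) (by omega)

lemma digitOf_order_ne_zero (hr : 0 ≤ r) (h : order r ≠ 0) : digitOf r (order r) ≠ 0 := by
  have hpos : (0 : ℝ) < 10 ^ (order r : ℤ) := by positivity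
  have hlow : 1 ≤ scaledFloor r (order r) :=
    Nat.le_floor (by rw [Nat.cast_one, le_div_iff₀ hpos, one_mul]; exact zpow_order_le h)
  have hhigh : scaledFloor r (order r) < 10 := by
    refine (Nat.floor_lt (by positivity)).2 ((div_lt_iff₀ hpos).2 ?_)
    simpa [zpow_add_one₀, mul_comm] using lt_zpow_order r
  intro h0
  have := congrArg Fin.val h0
  simp only [digitOf, Fin.val_zero] at this
  omega

/-- A run of 9s at all positions `≤ n` would make `C = (scaledFloor r m + 1) * 10 ^ m` independent
of `m ≤ n + 1`, and `C - 10 ^ m ≤ r < C` for all these `m` is impossible. -/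
lemma exists_digitOf_ne_nine (hr : 0 ≤ r) (n : ℤ) : ∃ m ≤ n, digitOf r m ≠ 9 := by
  by_contra! hnine
  set ceil : ℤ → ℝ := fun m => (scaledFloor r m + 1) * 10 ^ m
  have hstep : ∀ m ≤ n, ceil m = ceil (m + 1) := by
    intro m hm
    have h9 : ((digitOf r m : ℕ) : ℝ) = 9 := by rw [hnine m hm]; rfl
    simp only [ceil, scaledFloor_eq_ten_mul_add_digitOf r m, h9,
      zpow_add_one₀ (by norm_num : (10 : ℝ) ≠ 0)]
    ring
  have hconst : ∀ m ≤ n + 1, ceil m = ceil (n + 1) := by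
    intro m hm
    induction m, hm using Int.leInductionDown with
    | base => rfl
    | pred m hm ih => rw [hstep (m - 1) (by omega), sub_add_cancel, ih]
  have hclose : ceil (n + 1) - r ≤ 0 := by
    refine nonpos_of_forall_le_zpow (by norm_num : (1 : ℝ) < 10) (n + 1) fun m hm => ?_
    have := scaledFloor_mul_le hr m
    rw [← hconst m hm]
    simp only [ceil]
    linarith
  linarith [lt_scaledFloor_add_one_mul r (n + 1)]

noncomputable def ofNonneg (r : ℝ) (hr : 0 ≤ r) : Decimal where
  neg := false
  k := order r
  digits := digitOf r
  digits_above n hn := by simp [digitOf, scaledFloor_eq_zero hn]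
  leading := (em (order r = 0)).symm.imp_left (digitOf_order_ne_zero hr)
  no_nine_tail := exists_digitOf_ne_nine hr
  no_neg_zero := by simp

@[simp]
lemma ofNonneg_digits (hr : 0 ≤ r) : (ofNonneg r hr).digits = digitOf r := rfl

lemma scaledFloor_mul_add_tail (hr : 0 ≤ r) {m : ℤ} (hm : m ≤ order r + 1) :
    scaledFloor r m * 10 ^ m + (ofNonneg r hr).tail (m - 1) = (ofNonneg r hr).magnitude := by
  induction m, hm using Int.leInductionDown with
  | base =>
    rw [scaledFloor_eq_zero (by omega), add_sub_cancel_right]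
    simp only [Nat.cast_zero, zero_mul, zero_add]
    rfl
  | pred m hm ih =>
    have hdigit := scaledFloor_eq_ten_mul_add_digitOf r (m - 1)
    rw [sub_add_cancel] at hdigit
    rw [← ih, tail_eq_term_add_tail _ (m - 1), term, ofNonneg_digits, hdigit,
      zpow_sub_one₀ (by norm_num)]
    ring

lemma magnitude_ofNonneg (hr : 0 ≤ r) : (ofNonneg r hr).magnitude = r := by
  have hclose : |(ofNonneg r hr).magnitude - r| ≤ 0 := by
    refine nonpos_of_forall_le_zpow (by norm_num : (1 : ℝ) < 10) (order r + 1) fun m hm => ?_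
    rw [← scaledFloor_mul_add_tail hr hm, abs_le]
    have htail := (ofNonneg r hr).tail_lt_zpow (m - 1)
    rw [sub_add_cancel] at htail
    constructor <;> linarith [scaledFloor_mul_le hr m, lt_scaledFloor_add_one_mul r m,
      (ofNonneg r hr).tail_nonneg (m - 1)]
  exact sub_eq_zero.1 (abs_nonpos_iff.1 hclose)

end OfNonneg

lemma toReal_surjective : Function.Surjective toReal := by
  intro r
  rcases le_or_gt 0 r with hr | hr
  · exact ⟨ofNonneg r hr, magnitude_ofNonneg hr⟩
  · have hr' : 0 ≤ -r := by linarith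
    have hdigit : ∃ n, (ofNonneg (-r) hr').digits n ≠ 0 := by
      by_contra! hzero
      have : (ofNonneg (-r) hr').magnitude = 0 := by simp [magnitude, tail, term, hzero]
      rw [magnitude_ofNonneg] at this
      linarith
    refine ⟨{ ofNonneg (-r) hr' with neg := true, no_neg_zero := fun _ => hdigit }, ?_⟩
    change -(ofNonneg (-r) hr').magnitude = r
    rw [magnitude_ofNonneg, neg_neg]

end Decimal

/-- In the linear order of infinite decimal expansions, every nonempty set
bounded from above has a supremum (a least upper bound). -/
theorem decimal_supremum (U : Set Decimal) (hne : U.Nonempty)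
    (hbd : ∃ b : Decimal, ∀ u ∈ U, Decimal.lt u b ∨ u = b) :
    ∃ s : Decimal, (∀ u ∈ U, Decimal.lt u s ∨ u = s) ∧
      ∀ b : Decimal, (∀ u ∈ U, Decimal.lt u b ∨ u = b) → Decimal.lt s b ∨ s = b := by
  simp only [Decimal.lt_or_eq_iff_toReal_le] at hbd ⊢
  obtain ⟨b, hb⟩ := hbd
  have hbdd : BddAbove (Decimal.toReal '' U) := ⟨b.toReal, by simpa [upperBounds] using hb⟩
  obtain ⟨s, hs⟩ := Decimal.toReal_surjective (sSup (Decimal.toReal '' U))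
  refine ⟨s, fun u hu => hs ▸ le_csSup hbdd ⟨u, hu, rfl⟩, fun c hc => hs ▸ ?_⟩
  exact csSup_le (hne.image _) (by rintro _ ⟨u, hu, rfl⟩; exact hc u hu)
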